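/- arXiv:1408.1904 — 10 statements merged into one kernel-verified Lean document; each statement's English description precedes it below -/
import Mathlib

section
/- For all natural numbers n, m, t and all real numbers x, y, the t-fold application of the operator D_∂ satisfies: e^{(x+y)/2} · (D_∂^t (f))(x,y) = Σ_{i=0}^{min(t,m)} C(t,i) · (m!/(m−i)!) · ( e^x · (d^{t−i}/du^{t−i})(e^{−u} u^n)|_{u=x} ) · y^{m−i}, where f(x,y) = e^{−(x+y)/2} x^n y^m. -/
/-!
Since `D_∂` annihilates any function of `x - y`, it commutes with multiplication by such a
function, and on a product `p(x) q(y)` it acts as `p' ⊗ q + p ⊗ q'`; the binomial theorem for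
these two commuting derivations gives `D_∂^t (p ⊗ q) = ∑ C(t,i) p^(t-i) ⊗ q^(i)`. Apply this to
`e^{-(x+y)/2} x^n y^m = e^{(x-y)/2} · (e^{-x} x^n) · y^m`, and use `e^{(x+y)/2} e^{(x-y)/2} = e^x`
and `(d/dy)^i y^m = m!/(m-i)! · y^(m-i)`, which vanishes for `i > m`.
-/

/-- The operator `D_∂` sending a function `f : ℝ → ℝ → ℝ` (a curried function of
two real variables) to `(x, y) ↦ (∂f/∂x)(x,y) + (∂f/∂y)(x,y)`. -/
noncomputable def Dpartial (f : ℝ → ℝ → ℝ) : ℝ → ℝ → ℝ :=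
  fun x y => deriv (fun u => f u y) x + deriv (fun v => f x v) y

open Finset
open scoped ContDiff

theorem Dpartial_mul_sum {ι : Type*} (s : Finset ι) (w : ℝ → ℝ) (c : ι → ℝ)
    (P Q : ι → ℝ → ℝ) (hw : Differentiable ℝ w) (hP : ∀ i, Differentiable ℝ (P i))
    (hQ : ∀ i, Differentiable ℝ (Q i)) :
    Dpartial (fun a b => w (a - b) * ∑ i ∈ s, c i * (P i a * Q i b)) =
      fun a b => w (a - b) * ∑ i ∈ s, c i * (deriv (P i) a * Q i b + P i a * deriv (Q i) b) := by
  funext a b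
  have hda : HasDerivAt (fun u => w (u - b) * ∑ i ∈ s, c i * (P i u * Q i b))
      (deriv w (a - b) * 1 * ∑ i ∈ s, c i * (P i a * Q i b) +
        w (a - b) * ∑ i ∈ s, c i * (deriv (P i) a * Q i b)) a :=
    ((hw _).hasDerivAt.comp a ((hasDerivAt_id a).sub_const b)).mul
      (HasDerivAt.fun_sum fun i _ => (((hP i a).hasDerivAt).mul_const _).const_mul _)
  have hdb : HasDerivAt (fun v => w (a - v) * ∑ i ∈ s, c i * (P i a * Q i v))
      (deriv w (a - b) * (-1) * ∑ i ∈ s, c i * (P i a * Q i b) +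
        w (a - b) * ∑ i ∈ s, c i * (P i a * deriv (Q i) b)) b :=
    ((hw _).hasDerivAt.comp b ((hasDerivAt_id b).const_sub a)).mul
      (HasDerivAt.fun_sum fun i _ => (((hQ i b).hasDerivAt).const_mul _).const_mul _)
  simp only [Dpartial, hda.deriv, hdb.deriv, mul_add, sum_add_distrib]
  ring

theorem iterate_Dpartial_mul (w p q : ℝ → ℝ) (hw : Differentiable ℝ w) (hp : ContDiff ℝ ∞ p)
    (hq : ContDiff ℝ ∞ q) (t : ℕ) :
    Dpartial^[t] (fun a b => w (a - b) * (p a * q b)) =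
      fun a b => w (a - b) * ∑ i ∈ range (t + 1),
        (t.choose i : ℝ) * (iteratedDeriv (t - i) p a * iteratedDeriv i q b) := by
  induction t with
  | zero => simp
  | succ t ih =>
    have hdiff {f : ℝ → ℝ} (hf : ContDiff ℝ ∞ f) (k : ℕ) : Differentiable ℝ (iteratedDeriv k f) :=
      hf.differentiable_iteratedDeriv k (by exact_mod_cast WithTop.coe_lt_top _)
    rw [Function.iterate_succ_apply', ih, Dpartial_mul_sum _ _ _ (fun i => iteratedDeriv (t - i) p)
      _ hw (fun i => hdiff hp (t - i)) (hdiff hq)]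
    funext a b
    rw [sum_choose_succ_mul (fun i j => iteratedDeriv j p a * iteratedDeriv i q b), ← sum_add_distrib]
    congr 1
    refine sum_congr rfl fun i hi => ?_
    rw [← iteratedDeriv_succ, ← iteratedDeriv_succ, Nat.sub_add_comm (mem_range_succ_iff.1 hi)]
    ring

theorem stmt_0 (n m t : ℕ) (x y : ℝ) :
    Real.exp ((x + y) / 2) *
      (Dpartial^[t] (fun a b => Real.exp (-(a + b) / 2) * a ^ n * b ^ m)) x y =
    ∑ i ∈ Finset.range (min t m + 1),
      (t.choose i : ℝ) * ((m.factorial / (m - i).factorial : ℕ) : ℝ) *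
        (Real.exp x * iteratedDeriv (t - i) (fun u => Real.exp (-u) * u ^ n) x) *
        y ^ (m - i) := by
  have hsplit : (fun a b : ℝ => Real.exp (-(a + b) / 2) * a ^ n * b ^ m) =
      fun a b => Real.exp ((a - b) / 2) * ((Real.exp (-a) * a ^ n) * b ^ m) := by
    funext a b
    rw [← mul_assoc, ← mul_assoc, ← Real.exp_add]
    ring_nf
  have hweight : Real.exp ((x + y) / 2) * Real.exp ((x - y) / 2) = Real.exp x := by
    rw [← Real.exp_add]; ring_nf
  have hiter := iterate_Dpartial_mul (fun u => Real.exp (u / 2))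
    (fun u => Real.exp (-u) * u ^ n) (· ^ m) (by fun_prop) (by fun_prop) (by fun_prop) t
  beta_reduce at hiter
  rw [hsplit, hiter, ← mul_assoc, hweight, mul_sum]
  refine (sum_subset (range_subset_range.2 (by omega)) fun i hit hi => ?_).symm.trans
    (sum_congr rfl fun i hi => ?_)
  · have hmi : m < i := by simp only [mem_range] at hit hi; omega
    simp [Nat.descFactorial_eq_zero_iff_lt.2 hmi]
  · have him : i ≤ m := by simp only [mem_range] at hi; omega
    rw [iteratedDeriv_pow, Nat.descFactorial_eq_div him]
    ring
end

section
/- For all natural numbers n, m and all real numbers x, y: (1/(n!·m!)) · e^{(x+y)/2} · (D_∂^{n+m}(f))(x,y) = Σ_{i=0}^{m} Σ_{s=0}^{n} ((−1)^{i+s}/(i!·s!)) · C(m+n, m−i) · C(n+i, n−s) · x^s · y^i, where f(x,y) = e^{−(x+y)/2} x^n y^m. -/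
open Finset Function
open scoped ContDiff

section Smooth

variable {f g : ℝ → ℝ → ℝ}

theorem Differentiable.of_uncurry_fst (hf : Differentiable ℝ (uncurry f)) (y : ℝ) :
    Differentiable ℝ (fun x => f x y) := fun x =>
  show DifferentiableAt ℝ (uncurry f ∘ fun u => (u, y)) x from
    (hf (x, y)).comp x (differentiableAt_id.prodMk (differentiableAt_const y))

theorem Differentiable.of_uncurry_snd (hf : Differentiable ℝ (uncurry f)) (x : ℝ) :
    Differentiable ℝ (fun y => f x y) := fun y =>
  show DifferentiableAt ℝ (uncurry f ∘ fun v => (x, v)) y from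
    (hf (x, y)).comp y ((differentiableAt_const x).prodMk differentiableAt_id)

theorem Dpartial_apply_eq_fderiv {x y : ℝ} (hf : DifferentiableAt ℝ (uncurry f) (x, y)) :
    Dpartial f x y = fderiv ℝ (uncurry f) (x, y) (1, 1) := by
  have hx : HasDerivAt (fun u => f u y) (fderiv ℝ (uncurry f) (x, y) (1, 0)) x :=
    hf.hasFDerivAt.comp_hasDerivAt (l := uncurry f) x
      ((hasDerivAt_id x).prodMk (hasDerivAt_const x y))
  have hy : HasDerivAt (fun v => f x v) (fderiv ℝ (uncurry f) (x, y) (0, 1)) y :=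
    hf.hasFDerivAt.comp_hasDerivAt (l := uncurry f) y
      ((hasDerivAt_const y x).prodMk (hasDerivAt_id y))
  rw [Dpartial, hx.deriv, hy.deriv, ← map_add, Prod.mk_add_mk, add_zero, zero_add]

theorem contDiff_uncurry_Dpartial (hf : ContDiff ℝ ∞ (uncurry f)) :
    ContDiff ℝ ∞ (uncurry (Dpartial f)) := by
  have hD : uncurry (Dpartial f) = fun p => fderiv ℝ (uncurry f) p (1, 1) := by
    funext ⟨x, y⟩
    exact Dpartial_apply_eq_fderiv (hf.differentiable (by simp) (x, y))
  rw [hD]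
  exact (hf.fderiv_right le_rfl).clm_apply contDiff_const

theorem contDiff_uncurry_Dpartial_iterate (hf : ContDiff ℝ ∞ (uncurry f)) (k : ℕ) :
    ContDiff ℝ ∞ (uncurry (Dpartial^[k] f)) := by
  induction k with
  | zero => exact hf
  | succ k ih => rw [iterate_succ_apply']; exact contDiff_uncurry_Dpartial ih

theorem Dpartial_mul (hf : Differentiable ℝ (uncurry f)) (hg : Differentiable ℝ (uncurry g)) :
    Dpartial (fun x y => f x y * g x y) =
      fun x y => Dpartial f x y * g x y + f x y * Dpartial g x y := by
  funext x y
  simp only [Dpartial]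
  rw [deriv_fun_mul (hf.of_uncurry_fst y x) (hg.of_uncurry_fst y x),
    deriv_fun_mul (hf.of_uncurry_snd x y) (hg.of_uncurry_snd x y)]
  ring

theorem Dpartial_const_mul (c : ℝ) (f : ℝ → ℝ → ℝ) :
    Dpartial (fun x y => c * f x y) = fun x y => c * Dpartial f x y := by
  funext x y
  simp only [Dpartial, deriv_const_mul_field', mul_add]

theorem Dpartial_sum {ι : Type*} (s : Finset ι) (f : ι → ℝ → ℝ → ℝ)
    (hf : ∀ i ∈ s, Differentiable ℝ (uncurry (f i))) :
    Dpartial (fun x y => ∑ i ∈ s, f i x y) = fun x y => ∑ i ∈ s, Dpartial (f i) x y := by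
  funext x y
  simp only [Dpartial]
  rw [deriv_fun_sum fun i hi => (hf i hi).of_uncurry_fst y x,
    deriv_fun_sum fun i hi => (hf i hi).of_uncurry_snd x y, ← sum_add_distrib]

theorem Dpartial_iterate_mul (hf : ContDiff ℝ ∞ (uncurry f)) (hg : ContDiff ℝ ∞ (uncurry g))
    (k : ℕ) :
    Dpartial^[k] (fun x y => f x y * g x y) = fun x y =>
      ∑ j ∈ range (k + 1), (k.choose j : ℝ) * (Dpartial^[j] f x y * Dpartial^[k - j] g x y) := by
  have hdiff : ∀ j, Differentiable ℝ (uncurry (Dpartial^[j] f)) ∧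
      Differentiable ℝ (uncurry (Dpartial^[j] g)) := fun j =>
    ⟨(contDiff_uncurry_Dpartial_iterate hf j).differentiable (by simp),
      (contDiff_uncurry_Dpartial_iterate hg j).differentiable (by simp)⟩
  induction k with
  | zero => funext x y; simp
  | succ k ih =>
    rw [iterate_succ_apply', ih, Dpartial_sum]
    · funext x y
      simp only [Dpartial_const_mul, Dpartial_mul (hdiff _).1 (hdiff _).2,
        ← iterate_succ_apply' Dpartial]
      rw [sum_choose_succ_mul (fun i j => Dpartial^[i] f x y * Dpartial^[j] g x y)]
      simp only [mul_add, sum_add_distrib]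
      rw [add_comm]
      congr 1
      refine sum_congr rfl fun j hj => ?_
      rw [Nat.sub_add_comm (mem_range_succ_iff.mp hj)]
    · intro j _
      exact ((hdiff j).1.mul (hdiff (k - j)).2).const_mul _

end Smooth

theorem Dpartial_iterate_comp_fst (φ : ℝ → ℝ) (k : ℕ) :
    Dpartial^[k] (fun x (_ : ℝ) => φ x) = fun x _ => iteratedDeriv k φ x := by
  induction k with
  | zero => rfl
  | succ k ih =>
    funext x y
    simp [iterate_succ_apply', ih, Dpartial, iteratedDeriv_succ]

theorem Dpartial_iterate_comp_snd (ψ : ℝ → ℝ) (k : ℕ) :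
    Dpartial^[k] (fun (_ : ℝ) y => ψ y) = fun _ y => iteratedDeriv k ψ y := by
  induction k with
  | zero => rfl
  | succ k ih =>
    funext x y
    simp [iterate_succ_apply', ih, Dpartial, iteratedDeriv_succ]

theorem Dpartial_exp : Dpartial (fun a b => Real.exp (-(a + b) / 2)) =
    fun a b => -Real.exp (-(a + b) / 2) := by
  funext x y
  have hx : HasDerivAt (fun u => Real.exp (-(u + y) / 2))
      (Real.exp (-(x + y) / 2) * (-1 / 2)) x :=
    (((hasDerivAt_id x).add_const y).neg.div_const 2).exp.congr_deriv (by simp [neg_div])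
  have hy : HasDerivAt (fun v => Real.exp (-(x + v) / 2))
      (Real.exp (-(x + y) / 2) * (-1 / 2)) y :=
    (((hasDerivAt_id y).const_add x).neg.div_const 2).exp.congr_deriv (by simp [neg_div])
  rw [Dpartial, hx.deriv, hy.deriv]
  ring

theorem Dpartial_iterate_exp (k : ℕ) : Dpartial^[k] (fun a b => Real.exp (-(a + b) / 2)) =
    fun a b => (-1) ^ k * Real.exp (-(a + b) / 2) := by
  induction k with
  | zero => simp
  | succ k ih =>
    rw [iterate_succ_apply', ih, Dpartial_const_mul, Dpartial_exp]
    funext a b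
    ring

theorem Dpartial_iterate_pow_mul_exp (n k : ℕ) (x y : ℝ) :
    Dpartial^[k] (fun a b => a ^ n * Real.exp (-(a + b) / 2)) x y =
      ∑ c ∈ range (k + 1), (k.choose c : ℝ) *
        (n.descFactorial c * x ^ (n - c) * ((-1) ^ (k - c) * Real.exp (-(x + y) / 2))) := by
  have hpow : ContDiff ℝ ∞ (uncurry fun (a _ : ℝ) => a ^ n) := contDiff_fst.pow n
  have hexp : ContDiff ℝ ∞ (uncurry fun a b => Real.exp (-(a + b) / 2)) :=
    show ContDiff ℝ ∞ fun p : ℝ × ℝ => Real.exp (-(p.1 + p.2) / 2) by fun_prop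
  simp only [Dpartial_iterate_mul hpow hexp, Dpartial_iterate_comp_fst (· ^ n),
    Dpartial_iterate_exp, iteratedDeriv_pow]

theorem Dpartial_iterate_exp_mul_pow_mul_pow (n m k : ℕ) (x y : ℝ) :
    Dpartial^[k] (fun a b => Real.exp (-(a + b) / 2) * a ^ n * b ^ m) x y =
      Real.exp (-(x + y) / 2) * ∑ d ∈ range (k + 1), (m.descFactorial d : ℝ) *
        ((k.choose d : ℝ) * y ^ (m - d) * ∑ c ∈ range (k - d + 1), (n.descFactorial c : ℝ) *
          (((k - d).choose c : ℝ) * (-1) ^ (k - d - c) * x ^ (n - c))) := by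
  have hpow : ContDiff ℝ ∞ (uncurry fun (_ b : ℝ) => b ^ m) := contDiff_snd.pow m
  have hrest : ContDiff ℝ ∞ (uncurry fun a b => a ^ n * Real.exp (-(a + b) / 2)) :=
    show ContDiff ℝ ∞ fun p : ℝ × ℝ => p.1 ^ n * Real.exp (-(p.1 + p.2) / 2) by fun_prop
  have hf : (fun a b => Real.exp (-(a + b) / 2) * a ^ n * b ^ m) =
      fun a b => b ^ m * (a ^ n * Real.exp (-(a + b) / 2)) := by
    funext a b; ring
  rw [hf]
  simp only [Dpartial_iterate_mul hpow hrest, Dpartial_iterate_comp_snd (· ^ m),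
    iteratedDeriv_pow, Dpartial_iterate_pow_mul_exp, mul_sum]
  refine sum_congr rfl fun d _ => sum_congr rfl fun c _ => ?_
  ring

theorem sum_range_descFactorial_mul_of_le {R : Type*} [Semiring R] {N K : ℕ} (h : N ≤ K)
    (g : ℕ → R) :
    ∑ c ∈ range (K + 1), (N.descFactorial c : R) * g c =
      ∑ c ∈ range (N + 1), (N.descFactorial c : R) * g c := by
  refine (sum_subset (range_subset_range.mpr (by omega)) fun c _ hc => ?_).symm
  rw [Nat.descFactorial_eq_zero_iff_lt.mpr (by simpa using hc), Nat.cast_zero, zero_mul]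

theorem Nat.cast_descFactorial_sub_eq_factorial_div {K : Type*} [Field K] [CharZero K]
    {N i : ℕ} (h : i ≤ N) :
    (N.descFactorial (N - i) : K) = N.factorial / i.factorial := by
  have h' := Nat.factorial_mul_descFactorial (Nat.sub_le N i)
  rw [Nat.sub_sub_self h] at h'
  rw [eq_div_iff (Nat.cast_ne_zero.mpr i.factorial_ne_zero), mul_comm, ← Nat.cast_mul, h']

theorem stmt_1 (n m : ℕ) (x y : ℝ) :
    (1 / ((n.factorial : ℝ) * (m.factorial : ℝ))) * Real.exp ((x + y) / 2) *
      (Dpartial^[n + m] (fun a b => Real.exp (-(a + b) / 2) * a ^ n * b ^ m)) x y =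
    ∑ i ∈ Finset.range (m + 1), ∑ s ∈ Finset.range (n + 1),
      ((-1 : ℝ) ^ (i + s) / ((i.factorial : ℝ) * (s.factorial : ℝ))) *
        ((m + n).choose (m - i) : ℝ) * ((n + i).choose (n - s) : ℝ) *
        x ^ s * y ^ i := by
  have hexp : Real.exp ((x + y) / 2) * Real.exp (-(x + y) / 2) = 1 := by
    rw [← Real.exp_add, neg_div, add_neg_cancel, Real.exp_zero]
  rw [Dpartial_iterate_exp_mul_pow_mul_pow, ← mul_assoc, mul_assoc (1 / _), hexp, mul_one,
    sum_range_descFactorial_mul_of_le (Nat.le_add_left m n), ← sum_range_reflect (δ := ℝ),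
    mul_sum]
  refine sum_congr rfl fun i hi => ?_
  have hi : i ≤ m := mem_range_succ_iff.mp hi
  rw [add_tsub_cancel_right, show n + m - (m - i) = n + i by omega,
    sum_range_descFactorial_mul_of_le (Nat.le_add_right n i), ← sum_range_reflect (δ := ℝ)]
  simp only [mul_sum]
  refine sum_congr rfl fun s hs => ?_
  have hs : s ≤ n := mem_range_succ_iff.mp hs
  rw [add_tsub_cancel_right, show n + i - (n - s) = i + s by omega, Nat.sub_sub_self hi,
    Nat.sub_sub_self hs, Nat.cast_descFactorial_sub_eq_factorial_div hi,
    Nat.cast_descFactorial_sub_eq_factorial_div hs, add_comm n m]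
  field_simp
end

section
/- For all natural numbers n, m, the two-variable Laguerre polynomial is symmetric under simultaneously swapping the indices and the variables: 𝕃_{n,m}(X,Y) = 𝕃_{m,n}(Y,X) in ℤ[X,Y]. -/
open Polynomial MvPolynomial

/-- The scaled generalized Laguerre polynomial `ℒ_n^α(X) = n! · L_n^α(X) ∈ ℤ[X]`. -/
noncomputable def sLag (n α : ℕ) : Polynomial ℤ :=
  ∑ j ∈ Finset.range (n + 1),
    Polynomial.C ((-1 : ℤ) ^ j * ((n.factorial / j.factorial : ℕ) : ℤ) *
      ((n + α).choose (n - j) : ℤ)) * Polynomial.X ^ j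

/-- The scaled two-variable Laguerre polynomial
`𝕃_{n,m}(X,Y) = n!·m!·L_{n,m}(X,Y) ∈ ℤ[X,Y]`, with `X = X 0` and `Y = X 1`. -/
noncomputable def sLag2 (n m : ℕ) : MvPolynomial (Fin 2) ℤ :=
  ∑ i ∈ Finset.range (m + 1), ∑ s ∈ Finset.range (n + 1),
    MvPolynomial.C ((-1 : ℤ) ^ (i + s) * ((m.factorial / i.factorial : ℕ) : ℤ) *
        ((n.factorial / s.factorial : ℕ) : ℤ) *
        ((m + n).choose (m - i) : ℤ) * ((n + i).choose (n - s) : ℤ)) *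
      MvPolynomial.X 0 ^ s * MvPolynomial.X 1 ^ i

theorem Nat.choose_mul_choose_sub_comm {N a b : ℕ} (h : a + b ≤ N) :
    N.choose a * (N - a).choose b = N.choose b * (N - b).choose a := by
  have key := Nat.choose_mul (n := N) (k := N - b) (s := a) (by omega)
  rw [Nat.choose_symm (by omega), show N - b - a = N - a - b by omega,
    Nat.choose_symm (by omega)] at key
  exact key.symm

def sLag2Coeff (n m s i : ℕ) : ℤ :=
  (-1 : ℤ) ^ (i + s) * ((m.factorial / i.factorial : ℕ) : ℤ) *
    ((n.factorial / s.factorial : ℕ) : ℤ) *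
    ((m + n).choose (m - i) : ℤ) * ((n + i).choose (n - s) : ℤ)

theorem sLag2_eq_sum_sLag2Coeff (n m : ℕ) :
    sLag2 n m = ∑ i ∈ Finset.range (m + 1), ∑ s ∈ Finset.range (n + 1),
      MvPolynomial.C (sLag2Coeff n m s i) * MvPolynomial.X 0 ^ s * MvPolynomial.X 1 ^ i :=
  rfl

/-- Both products of binomials count the ways to split `m + n` objects into blocks of sizes
`m - i`, `n - s` and `i + s`. -/
theorem sLag2Coeff_comm {n m s i : ℕ} (hs : s ≤ n) (hi : i ≤ m) :
    sLag2Coeff n m s i = sLag2Coeff m n i s := by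
  have hchoose : ((m + n).choose (m - i) : ℤ) * (n + i).choose (n - s)
      = (n + m).choose (n - s) * (m + s).choose (m - i) := by
    norm_cast
    rw [show n + i = m + n - (m - i) by omega, show m + s = n + m - (n - s) by omega,
      add_comm n m, Nat.choose_mul_choose_sub_comm (by omega)]
  unfold sLag2Coeff
  rw [add_comm i s]
  linear_combination ((-1 : ℤ) ^ (s + i) * ((m.factorial / i.factorial : ℕ) : ℤ) *
    ((n.factorial / s.factorial : ℕ) : ℤ)) * hchoose

/-- `𝕃_{n,m}(X,Y) = 𝕃_{m,n}(Y,X)`: swapping both the indices and the variables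
leaves the two-variable Laguerre polynomial unchanged. -/
theorem stmt_3 (n m : ℕ) :
    sLag2 n m = MvPolynomial.rename (Equiv.swap (0 : Fin 2) 1) (sLag2 m n) := by
  simp only [sLag2_eq_sum_sLag2Coeff, map_sum, map_mul, map_pow, rename_C, rename_X,
    Equiv.swap_apply_left, Equiv.swap_apply_right]
  rw [Finset.sum_comm]
  refine Finset.sum_congr rfl fun i hi => Finset.sum_congr rfl fun s hs => ?_
  rw [sLag2Coeff_comm (Finset.mem_range_succ_iff.mp hs) (Finset.mem_range_succ_iff.mp hi)]
  ring
end

section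
/- For all natural numbers n, m, all positive integers q, all i with q ≤ i ≤ m+q, and all nonzero integers p, the polynomial congruence (i−q+1−p)_{m−(i−q)} · ℒ_n^i(X) ≡ (i−q+1)_{m−(i−q)} · ℒ_n^{i−q}(X) (mod gcd(p,q)) holds in ℤ[X]. -/
/-!
The `X^k`-coefficient of `ℒ_n^α` is `(-1)^k C(n,k) (α+k+1)_{n-k}`, a polynomial in `α`, so
the coefficients of `ℒ_n^i` and `ℒ_n^{i-q}` agree modulo `q`. Likewise the two Pochhammer
factors are values of one polynomial at arguments differing by `p`, so they agree modulo `p`.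
Both congruences hold modulo `gcd(p, q)`, and `a x ≡ b y` follows from `a ≡ b` and `x ≡ y`.
-/

open Polynomial MvPolynomial

open Nat in
lemma factorial_div_mul_choose_add (n α k : ℕ) (hk : k ≤ n) :
    n ! / k ! * (n + α).choose (n - k) = n.choose k * (α + k + 1).ascFactorial (n - k) := by
  have hdiv : n ! / k ! = n.choose k * (n - k)! := by
    rw [← Nat.choose_mul_factorial_mul_factorial hk, mul_comm (n.choose k) k !, mul_assoc,
      Nat.mul_div_cancel_left _ k.factorial_pos]
  rw [hdiv, Nat.ascFactorial_eq_factorial_mul_choose, show α + k + (n - k) = n + α by omega]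
  ring

lemma sLag_coeff (n α k : ℕ) :
    (sLag n α).coeff k =
      (-1) ^ k * n.choose k * (ascPochhammer ℤ (n - k)).eval ((α : ℤ) + k + 1) := by
  simp only [sLag, finsetSum_coeff, Polynomial.coeff_C_mul, Polynomial.coeff_X_pow, mul_ite,
    mul_one, mul_zero, Finset.sum_ite_eq, Finset.mem_range]
  split_ifs with hk
  · rw [mul_assoc, mul_assoc, ← Nat.cast_mul,
      factorial_div_mul_choose_add n α k (Nat.lt_succ_iff.mp hk), Nat.cast_mul,
      ← ascPochhammer_nat_eq_ascFactorial, ascPochhammer_eval_cast]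
    push_cast
    rfl
  · rw [Nat.choose_eq_zero_of_lt (by omega)]
    simp

lemma sub_dvd_sLag_coeff_sub (n α β k : ℕ) :
    ((α : ℤ) - β) ∣ (sLag n α).coeff k - (sLag n β).coeff k := by
  rw [sLag_coeff, sLag_coeff, ← mul_sub]
  refine Dvd.dvd.mul_left ?_ _
  convert sub_dvd_eval_sub ((α : ℤ) + k + 1) ((β : ℤ) + k + 1) _ using 1
  ring

theorem stmt_6_general (n m : ℕ) (q : ℕ) (i : ℕ) (hqi : q ≤ i)
    (p : ℤ) :
    ∀ k : ℕ, (Int.gcd p (q : ℤ) : ℤ) ∣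
      (Polynomial.C ((ascPochhammer ℤ (m - (i - q))).eval ((i : ℤ) - q + 1 - p)) * sLag n i -
        Polynomial.C ((ascPochhammer ℤ (m - (i - q))).eval ((i : ℤ) - q + 1)) *
          sLag n (i - q)).coeff k := by
  intro k
  rw [Polynomial.coeff_sub, Polynomial.coeff_C_mul, Polynomial.coeff_C_mul]
  refine dvd_mul_sub_mul ?_ ?_
  · have hp :=
      sub_dvd_eval_sub ((i : ℤ) - q + 1 - p) ((i : ℤ) - q + 1) (ascPochhammer ℤ (m - (i - q)))
    rw [show (i : ℤ) - q + 1 - p - ((i : ℤ) - q + 1) = -p by ring, neg_dvd] at hp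
    exact (Int.gcd_dvd_left p q).trans hp
  · have hq := sub_dvd_sLag_coeff_sub n i (i - q) k
    rw [Nat.cast_sub hqi, sub_sub_cancel] at hq
    exact (Int.gcd_dvd_right p q).trans hq

theorem stmt_6 (n m : ℕ) (q : ℕ) (hq : 0 < q) (i : ℕ) (hqi : q ≤ i) (him : i ≤ m + q)
    (p : ℤ) (hp : p ≠ 0) :
    ∀ k : ℕ, (Int.gcd p (q : ℤ) : ℤ) ∣
      (Polynomial.C ((ascPochhammer ℤ (m - (i - q))).eval ((i : ℤ) - q + 1 - p)) * sLag n i -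
        Polynomial.C ((ascPochhammer ℤ (m - (i - q))).eval ((i : ℤ) - q + 1)) *
          sLag n (i - q)).coeff k :=
  stmt_6_general n m q i hqi p
end

section
/- For all natural numbers n, m and all positive integers q, the polynomial congruence ℒ_n^{m+q}(X) ≡ ℒ_n^{m}(X) (mod q) holds in ℤ[X]. -/
open Polynomial MvPolynomial

/-!
The `X^k` coefficient of `ℒ_n^α` is `(-1)^k C(n,k) (n+α)(n+α-1)⋯(α+k+1)`, i.e. `(-1)^k C(n,k)`
times the descending Pochhammer polynomial of degree `n-k` evaluated at `n+α`. For an integer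
polynomial `P`, `a - b` divides `P(a) - P(b)`, so shifting `α` by `q` changes each coefficient by
a multiple of `q`.
-/

open Nat in
theorem Nat.factorial_div_factorial_mul_choose_add {n j : ℕ} (α : ℕ) (hj : j ≤ n) :
    n ! / j ! * (n + α).choose (n - j) = n.choose j * (n + α).descFactorial (n - j) := by
  have hnj : n - (n - j) = j := Nat.sub_sub_self hj
  rw [Nat.descFactorial_eq_factorial_mul_choose, ← hnj, ← Nat.descFactorial_eq_div (Nat.sub_le n j),
    Nat.descFactorial_eq_factorial_mul_choose, hnj, Nat.choose_symm hj]
  ring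

theorem Nat.intCast_dvd_descFactorial_add_sub (a q k : ℕ) :
    (q : ℤ) ∣ ((a + q).descFactorial k : ℤ) - (a.descFactorial k : ℤ) := by
  have h := Polynomial.sub_dvd_eval_sub ((a + q : ℕ) : ℤ) (a : ℤ) (descPochhammer ℤ k)
  rwa [descPochhammer_eval_eq_descFactorial, descPochhammer_eval_eq_descFactorial,
    Nat.cast_add, add_sub_cancel_left] at h

theorem coeff_sLag (n α k : ℕ) :
    (sLag n α).coeff k =
      if k ≤ n then (-1) ^ k * n.choose k * ((n + α).descFactorial (n - k) : ℤ) else 0 := by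
  simp only [sLag, finsetSum_coeff, coeff_C_mul_X_pow, Finset.sum_ite_eq, Finset.mem_range,
    Nat.lt_succ_iff]
  split_ifs with hk
  · rw [mul_assoc, ← Nat.cast_mul, Nat.factorial_div_factorial_mul_choose_add α hk]
    push_cast
    ring
  · rfl

theorem stmt_7_general (n m : ℕ) (q : ℕ) :
    ∀ k : ℕ, (q : ℤ) ∣ (sLag n (m + q) - sLag n m).coeff k := by
  intro k
  rw [Polynomial.coeff_sub, coeff_sLag, coeff_sLag, ← add_assoc]
  split_ifs
  · rw [← mul_sub]
    exact dvd_mul_of_dvd_right (Nat.intCast_dvd_descFactorial_add_sub (n + m) q (n - k)) _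
  · simp

theorem stmt_7 (n m : ℕ) (q : ℕ) (hq : 0 < q) :
    ∀ k : ℕ, (q : ℤ) ∣ (sLag n (m + q) - sLag n m).coeff k :=
  stmt_7_general n m q
end

section
/- For all natural numbers m, n, all positive integers q, all nonzero integers p, and all i with q ≤ i ≤ m+q, the congruence C(m, m+q−i) · (n+p+i−q+1)_{m−(i−q)} ≡ C(m+n, m+q−i) · (i−q−p+1)_{m−(i−q)} (mod gcd(p,q)) holds in ℤ. -/
/-!
Modulo `gcd(p, q)` the shift by `p` disappears, since a polynomial with integer coefficients
preserves congruences. Writing `i = q + j` and `m = j + k`, what remains is the exact identity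
`C(j+k, k) (j+n+1)_k = C(j+k+n, k) (j+1)_k`, both sides being `(j+k)! (j+k+n)! / (j! k! (j+n)!)`.
-/

open Polynomial

theorem Int.ModEq.polynomial_eval {d a b : ℤ} (h : a ≡ b [ZMOD d]) (P : ℤ[X]) :
    P.eval a ≡ P.eval b [ZMOD d] :=
  Int.modEq_iff_dvd.2 (h.dvd.trans (sub_dvd_eval_sub b a P))

theorem Nat.choose_mul_ascFactorial_add_comm (j k n : ℕ) :
    (j + k).choose k * (j + n + 1).ascFactorial k
      = (j + k + n).choose k * (j + 1).ascFactorial k := by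
  rw [Nat.ascFactorial_eq_factorial_mul_choose, Nat.ascFactorial_eq_factorial_mul_choose,
    Nat.add_right_comm j n k]
  ring

theorem choose_mul_ascPochhammer_eval_add_comm {S : Type*} [Semiring S] (j k n : ℕ) :
    ((j + k).choose k : S) * (ascPochhammer S k).eval ((j + n + 1 : ℕ) : S)
      = ((j + k + n).choose k : S) * (ascPochhammer S k).eval ((j + 1 : ℕ) : S) := by
  rw [← ascPochhammer_eval_cast, ← ascPochhammer_eval_cast, ascPochhammer_nat_eq_ascFactorial,
    ascPochhammer_nat_eq_ascFactorial]
  exact_mod_cast congrArg (Nat.cast : ℕ → S) (Nat.choose_mul_ascFactorial_add_comm j k n)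

theorem stmt_8_general (m n : ℕ) (q : ℕ) (p : ℤ)
    (i : ℕ) (hqi : q ≤ i) (him : i ≤ m + q) :
    (Int.gcd p (q : ℤ) : ℤ) ∣
      (m.choose (m + q - i) : ℤ) *
          (ascPochhammer ℤ (m - (i - q))).eval ((n : ℤ) + p + i - q + 1) -
        ((m + n).choose (m + q - i) : ℤ) *
          (ascPochhammer ℤ (m - (i - q))).eval ((i : ℤ) - q - p + 1) := by
  obtain ⟨j, rfl⟩ : ∃ j, i = q + j := ⟨i - q, by omega⟩
  obtain ⟨k, rfl⟩ : ∃ k, m = j + k := ⟨m - j, by omega⟩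
  rw [show j + k + q - (q + j) = k by omega, show j + k - (q + j - q) = k by omega]
  have hp : (Int.gcd p q : ℤ) ∣ p := Int.gcd_dvd_left p q
  apply Int.ModEq.dvd
  calc ((j + k + n).choose k : ℤ) * (ascPochhammer ℤ k).eval (((q + j : ℕ) : ℤ) - q - p + 1)
      ≡ ((j + k + n).choose k : ℤ) * (ascPochhammer ℤ k).eval ((j + 1 : ℕ) : ℤ)
        [ZMOD Int.gcd p q] :=
        (Int.ModEq.polynomial_eval (Int.modEq_iff_dvd.2 (by push_cast; ring_nf; exact hp)) _
          ).mul_left _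
    _ = ((j + k).choose k : ℤ) * (ascPochhammer ℤ k).eval ((j + n + 1 : ℕ) : ℤ) :=
        (choose_mul_ascPochhammer_eval_add_comm j k n).symm
    _ ≡ ((j + k).choose k : ℤ) * (ascPochhammer ℤ k).eval ((n : ℤ) + p + (q + j : ℕ) - q + 1)
        [ZMOD Int.gcd p q] :=
        (Int.ModEq.polynomial_eval (Int.modEq_iff_dvd.2 (by push_cast; ring_nf; exact hp)) _
          ).mul_left _

theorem stmt_8 (m n : ℕ) (q : ℕ) (hq : 0 < q) (p : ℤ) (hp : p ≠ 0)
    (i : ℕ) (hqi : q ≤ i) (him : i ≤ m + q) :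
    (Int.gcd p (q : ℤ) : ℤ) ∣
      (m.choose (m + q - i) : ℤ) *
          (ascPochhammer ℤ (m - (i - q))).eval ((n : ℤ) + p + i - q + 1) -
        ((m + n).choose (m + q - i) : ℤ) *
          (ascPochhammer ℤ (m - (i - q))).eval ((i : ℤ) - q - p + 1) :=
  stmt_8_general m n q p i hqi him
end

section
/- For all natural numbers n, i and all positive integers p, the polynomial congruence ℒ_{n+p}^i(X) ≡ ℒ_n^i(X) · ℒ_p^i(X) (mod p) holds in ℤ[X]. (Equivalently, (n+p)!·L_{n+p}^i(x) ≡ n!·L_n^i(x) · p!·L_p^i(x) (mod p), the congruence of Carlitz.) -/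
/-! Modulo `p` the falling factorial `(a)_m` is a polynomial in `a`, hence unchanged by
`a ↦ a + p`; as `(n)_m C(N, m) = C(n, m) (N)_m`, so is `(n)_m C(N, m)`, in both `n` and `N`.
Indexing by `m = n - j`, `ℒ_n^α = ∑_{m ≤ n} (n)_m C(n + α, m) (-X)^(n - m)`. Hence the terms of
`ℒ_{n+p}^α` agree mod `p` with those of `ℒ_n^α` times `(-X)^p`, and vanish for `m > n` because
`(n)_m = 0` there: `ℒ_{n+p}^α ≡ ℒ_n^α (-X)^p`. The case `n = 0` gives `ℒ_p^α ≡ (-X)^p`. -/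

open Polynomial MvPolynomial

open Finset

theorem Nat.cast_descFactorial_add_self (a p m : ℕ) :
    ((a + p).descFactorial m : ZMod p) = a.descFactorial m := by
  rw [← descPochhammer_eval_eq_descFactorial, ← descPochhammer_eval_eq_descFactorial,
    Nat.cast_add, ZMod.natCast_self, add_zero]

theorem Nat.cast_descFactorial_mul_choose_add_self (n N p m : ℕ) :
    ((n + p).descFactorial m * (N + p).choose m : ZMod p) =
      n.descFactorial m * N.choose m := by
  have hN (a : ℕ) : (a.descFactorial m : ZMod p) = m.factorial * a.choose m := by
    rw [Nat.descFactorial_eq_factorial_mul_choose, Nat.cast_mul]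
  calc ((n + p).descFactorial m * (N + p).choose m : ZMod p)
      = n.choose m * (N + p).descFactorial m := by
        rw [Nat.cast_descFactorial_add_self, hN, hN]; ring
    _ = n.descFactorial m * N.choose m := by
        rw [Nat.cast_descFactorial_add_self, hN, hN]; ring

theorem sLag_eq_sum_descFactorial (n α : ℕ) :
    sLag n α = ∑ m ∈ range (n + 1),
      Polynomial.C ((n.descFactorial m * (n + α).choose m : ℕ) : ℤ) *
        (-Polynomial.X) ^ (n - m) := by
  rw [sLag, ← sum_range_reflect]
  refine sum_congr rfl fun m hm => ?_
  have hmn : m ≤ n := Nat.lt_succ_iff.mp (mem_range.mp hm)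
  rw [Nat.add_sub_cancel, Nat.sub_sub_self hmn, ← Nat.descFactorial_eq_div hmn, neg_pow]
  simp only [Nat.cast_mul, map_mul, map_pow, map_neg, map_one]
  ring

theorem sLag_map_eq_sum (N α p : ℕ) :
    (sLag N α).map (Int.castRingHom (ZMod p)) = ∑ m ∈ range (N + 1),
      Polynomial.C ((N.descFactorial m : ZMod p) * (N + α).choose m) *
        (-Polynomial.X) ^ (N - m) := by
  rw [sLag_eq_sum_descFactorial, Polynomial.map_sum]
  refine sum_congr rfl fun m _ => ?_
  rw [Polynomial.map_mul, Polynomial.map_C, Polynomial.map_pow, Polynomial.map_neg,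
    Polynomial.map_X, eq_intCast, Int.cast_natCast, Nat.cast_mul]

theorem sLag_add_map (n α p : ℕ) :
    (sLag (n + p) α).map (Int.castRingHom (ZMod p)) =
      (sLag n α).map (Int.castRingHom (ZMod p)) * (-Polynomial.X) ^ p := by
  rw [sLag_map_eq_sum, sLag_map_eq_sum, sum_mul]
  refine (sum_subset_zero_on_sdiff (range_subset_range.mpr (by omega)) ?_ ?_).symm
  · intro m hm
    obtain ⟨-, hmn⟩ := mem_sdiff.mp hm
    have hnm : n < m := by simpa using hmn
    rw [add_right_comm, Nat.cast_descFactorial_mul_choose_add_self,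
      Nat.descFactorial_eq_zero_iff_lt.mpr hnm, Nat.cast_zero, zero_mul, map_zero, zero_mul]
  · intro m hm
    have hmn : m ≤ n := Nat.lt_succ_iff.mp (mem_range.mp hm)
    rw [add_right_comm n p α, Nat.cast_descFactorial_mul_choose_add_self, mul_assoc, ← pow_add,
      Nat.sub_add_comm hmn]

theorem sLag_zero (α : ℕ) : sLag 0 α = 1 := by
  simp [sLag]

theorem sLag_map_self (α p : ℕ) :
    (sLag p α).map (Int.castRingHom (ZMod p)) = (-Polynomial.X) ^ p := by
  simpa [sLag_zero] using sLag_add_map 0 α p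

theorem stmt_10_general (n i : ℕ) (p : ℕ) :
    ∀ k : ℕ, (p : ℤ) ∣ (sLag (n + p) i - sLag n i * sLag p i).coeff k := by
  intro k
  rw [← ZMod.intCast_zmod_eq_zero_iff_dvd, ← eq_intCast (Int.castRingHom (ZMod p)),
    ← Polynomial.coeff_map, Polynomial.map_sub, Polynomial.map_mul, sLag_add_map,
    sLag_map_self, sub_self, Polynomial.coeff_zero]

/-- Carlitz' congruence: `(n+p)!·L_{n+p}^i(x) ≡ n!·L_n^i(x) · p!·L_p^i(x) (mod p)`. -/
theorem stmt_10 (n i : ℕ) (p : ℕ) (hp : 0 < p) :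
    ∀ k : ℕ, (p : ℤ) ∣ (sLag (n + p) i - sLag n i * sLag p i).coeff k :=
  stmt_10_general n i p
end

section
/- For all natural numbers n, m and all positive integers p, q, the polynomial congruence 𝕃_{n+p,m+q}(X,Y) ≡ 𝕃_{n,m}(X,Y) · 𝕃_{p,q}(X,Y) (mod gcd(p,q)) holds in ℤ[X,Y]. (Equivalently, (n+p)!(m+q)!·L_{n+p,m+q}(x,y) ≡ n!m!·L_{n,m}(x,y) · p!q!·L_{p,q}(x,y) (mod gcd(p,q)).) -/
/-!
Write `N = n + m`, `P = p + q` and `d = gcd p q`. The coefficient of `X^s Y^i` in `𝕃_{n,m}` is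
`N!/(s+i)!` times that of `(1 - X)^n (1 - Y)^m`, and these binomial products multiply, so both
sides of the congruence are Cauchy products over the same antidiagonal and can be compared term
by term, as descending factorials modulo `d`. The term taking `X^p Y^q` from the second factor
matches because a descending factorial starting at `N + P` agrees modulo `d` with the one of the
same length starting at `N`. Every other term vanishes modulo `d` on both sides: on the right
`P!/(j+k)!` is a multiple of `P`; on the left the descending factorial is divisible by
`(p-j+q-k)!`, and `C(p,j) C(q,k) (p-j+q-k)!` is a multiple of both `p!/j!` and `q!/k!`, where
`p ∣ p!/j!` if `j < p` and `q ∣ q!/k!` if `k < q`.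
-/

open Polynomial MvPolynomial

open Finset Nat

section Descending
variable {R : Type*} [CommRing R]

theorem cast_descFactorial_add_of_cast_eq_zero {B : ℕ} (hB : (B : R) = 0) (A r : ℕ) :
    ((A + B).descFactorial r : R) = A.descFactorial r := by
  rw [← descPochhammer_eval_eq_descFactorial, ← descPochhammer_eval_eq_descFactorial,
    Nat.cast_add, hB, add_zero]

theorem cast_descFactorial_eq_zero_of_cast_eq_zero {B : ℕ} (hB : (B : R) = 0) {r : ℕ}
    (hr : 0 < r) : (B.descFactorial r : R) = 0 := by
  obtain ⟨r, rfl⟩ := Nat.exists_eq_add_of_lt hr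
  simpa using cast_descFactorial_add_of_cast_eq_zero hB 0 (r + 1)

theorem cast_choose_mul_choose_mul_factorial_eq_zero {p q j k : ℕ} (hp : (p : R) = 0)
    (hq : (q : R) = 0) (hj : j ≤ p) (hk : k ≤ q) (hjk : ¬(j = p ∧ k = q)) :
    ((p.choose j * q.choose k * (p - j + (q - k))! : ℕ) : R) = 0 := by
  have key : p.choose j * q.choose k * (p - j + (q - k))! =
      p.descFactorial (p - j) * q.descFactorial (q - k) * (p - j + (q - k)).choose (q - k) := by
    rw [← add_choose_mul_factorial_mul_factorial, descFactorial_eq_factorial_mul_choose,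
      descFactorial_eq_factorial_mul_choose, choose_symm hj, choose_symm hk]
    ring
  rw [key, Nat.cast_mul, Nat.cast_mul]
  rcases Nat.lt_or_ge j p with hjp | hjp
  · rw [cast_descFactorial_eq_zero_of_cast_eq_zero hp (by omega)]; ring
  · rw [cast_descFactorial_eq_zero_of_cast_eq_zero hq (by omega)]; ring

theorem cast_choose_mul_choose_mul_descFactorial_add {p q j k : ℕ} (hp : (p : R) = 0)
    (hq : (q : R) = 0) (hj : j ≤ p) (hk : k ≤ q) (N r : ℕ) :
    ((p.choose j * q.choose k * (N + (p + q)).descFactorial (r + (p - j + (q - k))) : ℕ) : R) =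
      ((p.choose j * q.choose k * (N.descFactorial r * (p + q).descFactorial (p - j + (q - k)))
        : ℕ) : R) := by
  have hpq : ((p + q : ℕ) : R) = 0 := by rw [Nat.cast_add, hp, hq, add_zero]
  by_cases htop : j = p ∧ k = q
  · obtain ⟨rfl, rfl⟩ := htop
    simp [cast_descFactorial_add_of_cast_eq_zero hpq]
  · obtain ⟨c, hc⟩ : (p - j + (q - k))! ∣ N.descFactorial (r + (p - j + (q - k))) :=
      (factorial_dvd_factorial le_add_self).trans (factorial_dvd_descFactorial _ _)
    rw [Nat.cast_mul, Nat.cast_mul _ (N.descFactorial r * _), Nat.cast_mul (N.descFactorial r),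
      cast_descFactorial_eq_zero_of_cast_eq_zero hpq (by omega),
      cast_descFactorial_add_of_cast_eq_zero hpq, hc, ← Nat.cast_mul, ← mul_assoc,
      Nat.cast_mul, cast_choose_mul_choose_mul_factorial_eq_zero hp hq hj hk htop]
    ring

end Descending

theorem coeff_sum_sum_C_mul_X_pow {R : Type*} [CommSemiring R] (f : ℕ → ℕ → R) (n m : ℕ)
    (v : Fin 2 →₀ ℕ) :
    MvPolynomial.coeff v (∑ i ∈ range (m + 1), ∑ s ∈ range (n + 1),
        MvPolynomial.C (f s i) * MvPolynomial.X 0 ^ s * MvPolynomial.X 1 ^ i) =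
      if v 0 ≤ n ∧ v 1 ≤ m then f (v 0) (v 1) else 0 := by
  have hv : ∀ s i,
      Finsupp.single (0 : Fin 2) s + Finsupp.single 1 i = v ↔ s = v 0 ∧ i = v 1 := by
    intro s i
    constructor
    · rintro rfl; simp
    · rintro ⟨rfl, rfl⟩; ext a; fin_cases a <;> simp
  simp [MvPolynomial.X_pow_eq_monomial, MvPolynomial.C_mul_monomial,
    MvPolynomial.monomial_mul, MvPolynomial.coeff_sum, MvPolynomial.coeff_monomial, hv, ite_and]

noncomputable def binom2 (n m : ℕ) : MvPolynomial (Fin 2) ℤ :=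
  (1 - MvPolynomial.X 0) ^ n * (1 - MvPolynomial.X 1) ^ m

theorem binom2_add (n m p q : ℕ) : binom2 (n + p) (m + q) = binom2 n m * binom2 p q := by
  simp only [binom2, pow_add]
  ring

theorem coeff_binom2 (n m : ℕ) (v : Fin 2 →₀ ℕ) :
    MvPolynomial.coeff v (binom2 n m) = (-1) ^ (v 0 + v 1) * n.choose (v 0) * m.choose (v 1) := by
  have expand : binom2 n m = ∑ i ∈ range (m + 1), ∑ s ∈ range (n + 1),
      MvPolynomial.C ((-1) ^ (s + i) * n.choose s * m.choose i : ℤ) *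
        MvPolynomial.X 0 ^ s * MvPolynomial.X 1 ^ i := by
    rw [binom2, sub_eq_neg_add, sub_eq_neg_add, add_pow, add_pow, sum_mul_sum, sum_comm]
    refine sum_congr rfl fun i _ => sum_congr rfl fun s _ => ?_
    simp only [one_pow, mul_one, map_mul, map_pow, map_neg, map_one, map_natCast]
    ring
  rw [expand, coeff_sum_sum_C_mul_X_pow]
  split_ifs with h
  · rfl
  · rcases not_and_or.mp h with h | h <;> simp [choose_eq_zero_of_lt (not_le.mp h)]

theorem factorial_div_mul_choose_eq_choose_mul_descFactorial {n m s i : ℕ} (hs : s ≤ n)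
    (hi : i ≤ m) :
    m ! / i ! * (n ! / s !) * (m + n).choose (m - i) * (n + i).choose (n - s) =
      n.choose s * m.choose i * (n + m).descFactorial (n + m - (s + i)) := by
  have factorial_div {K t : ℕ} (ht : t ≤ K) : K ! / t ! = (K - t)! * K.choose t := by
    rw [← choose_symm ht, ← descFactorial_eq_factorial_mul_choose,
      descFactorial_eq_div (sub_le K t), Nat.sub_sub_self ht]
  have split : (n + i).descFactorial (n - s) * (m + n).descFactorial (m - i) =
      (m + n).descFactorial (m + n - (s + i)) := by
    have := descFactorial_mul_descFactorial (n := m + n) (k := m - i) (m := m + n - (s + i))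
      (by omega)
    rwa [show m + n - (m - i) = n + i by omega, show m + n - (s + i) - (m - i) = n - s by omega]
      at this
  rw [add_comm n m, factorial_div hi, factorial_div hs, ← split,
    descFactorial_eq_factorial_mul_choose, descFactorial_eq_factorial_mul_choose]
  ring

theorem coeff_sLag2 (n m : ℕ) (v : Fin 2 →₀ ℕ) :
    MvPolynomial.coeff v (sLag2 n m) =
      (n + m).descFactorial (n + m - (v 0 + v 1)) * MvPolynomial.coeff v (binom2 n m) := by
  rw [sLag2, coeff_sum_sum_C_mul_X_pow, coeff_binom2]
  split_ifs with h
  · have key := congrArg (Nat.cast : ℕ → ℤ)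
      (factorial_div_mul_choose_eq_choose_mul_descFactorial h.1 h.2)
    push_cast at key ⊢
    linear_combination (-1 : ℤ) ^ (v 0 + v 1) * key
  · rcases not_and_or.mp h with h | h <;> simp [choose_eq_zero_of_lt (not_le.mp h)]

section Congruence
variable {R : Type*} [CommRing R] {p q : ℕ}

theorem cast_choose_mul_descFactorial_add (hp : (p : R) = 0) (hq : (q : R) = 0)
    (n m a b j k : ℕ) :
    ((n.choose a * m.choose b * (p.choose j * q.choose k) *
        (n + p + (m + q)).descFactorial (n + p + (m + q) - (a + j + (b + k))) : ℕ) : R) =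
      ((n.choose a * m.choose b * (n + m).descFactorial (n + m - (a + b)) *
        (p.choose j * q.choose k * (p + q).descFactorial (p + q - (j + k))) : ℕ) : R) := by
  by_cases hab : a ≤ n ∧ b ≤ m
  swap
  · have : n.choose a * m.choose b = 0 := by
      rcases not_and_or.mp hab with h | h <;> simp [choose_eq_zero_of_lt (not_le.mp h)]
    simp [this]
  by_cases hjk : j ≤ p ∧ k ≤ q
  swap
  · have : p.choose j * q.choose k = 0 := by
      rcases not_and_or.mp hjk with h | h <;> simp [choose_eq_zero_of_lt (not_le.mp h)]
    simp [this]
  have key := cast_choose_mul_choose_mul_descFactorial_add hp hq hjk.1 hjk.2 (n + m)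
    (n + m - (a + b))
  rw [show n + p + (m + q) = n + m + (p + q) by ring,
    show n + m + (p + q) - (a + j + (b + k)) = n + m - (a + b) + (p - j + (q - k)) by omega,
    show p + q - (j + k) = p - j + (q - k) by omega]
  push_cast at key ⊢
  linear_combination (n.choose a * m.choose b : R) * key

theorem map_sLag2_add (hp : (p : R) = 0) (hq : (q : R) = 0) (n m : ℕ) :
    MvPolynomial.map (Int.castRingHom R) (sLag2 (n + p) (m + q)) =
      MvPolynomial.map (Int.castRingHom R) (sLag2 n m * sLag2 p q) := by
  ext v
  simp only [MvPolynomial.coeff_map, MvPolynomial.coeff_mul, coeff_sLag2, binom2_add,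
    eq_intCast, Int.cast_sum, Int.cast_mul, mul_sum]
  refine sum_congr rfl fun x hx => ?_
  have hv : ∀ i, v i = x.1 i + x.2 i := fun i => by rw [← (mem_antidiagonal.mp hx)]; rfl
  rw [coeff_binom2, coeff_binom2, hv 0, hv 1]
  have key := cast_choose_mul_descFactorial_add (R := R) hp hq n m (x.1 0) (x.1 1) (x.2 0) (x.2 1)
  push_cast at key ⊢
  linear_combination (-1 : R) ^ (x.1 0 + x.1 1 + (x.2 0 + x.2 1)) * key

end Congruence

theorem stmt_13_general (n m : ℕ) (p q : ℕ) :
    ∀ v : Fin 2 →₀ ℕ, (Nat.gcd p q : ℤ) ∣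
      MvPolynomial.coeff v (sLag2 (n + p) (m + q) - sLag2 n m * sLag2 p q) := by
  intro v
  have hp : (p : ZMod (p.gcd q)) = 0 := (ZMod.natCast_eq_zero_iff _ _).mpr (Nat.gcd_dvd_left p q)
  have hq : (q : ZMod (p.gcd q)) = 0 := (ZMod.natCast_eq_zero_iff _ _).mpr (Nat.gcd_dvd_right p q)
  rw [← ZMod.intCast_zmod_eq_zero_iff_dvd, MvPolynomial.coeff_sub, Int.cast_sub, sub_eq_zero]
  simpa only [MvPolynomial.coeff_map, eq_intCast] using
    congrArg (MvPolynomial.coeff v) (map_sLag2_add hp hq n m)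

/-- The main theorem: `𝕃_{n+p,m+q}(X,Y) ≡ 𝕃_{n,m}(X,Y)·𝕃_{p,q}(X,Y) (mod gcd(p,q))`. -/
theorem stmt_13 (n m : ℕ) (p q : ℕ) (hp : 0 < p) (hq : 0 < q) :
    ∀ v : Fin 2 →₀ ℕ, (Nat.gcd p q : ℤ) ∣
      MvPolynomial.coeff v (sLag2 (n + p) (m + q) - sLag2 n m * sLag2 p q) :=
  stmt_13_general n m p q
end

section
/- For all natural numbers n, m, all positive integers p, q, and all indices t ≤ n+p and i ≤ m+q such that t < p or i < q, the integer gcd(p,q) divides the coefficient of X^t Y^i in 𝕃_{n+p,m+q}(X,Y), i.e. gcd(p,q) divides (−1)^{i+t} · ((n+p)!/t!) · ((m+q)!/i!) · C(m+q+n+p, m+q−i) · C(n+p+i, n+p−t). -/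
open Polynomial MvPolynomial

/-! Every coefficient of `𝕃_{n+p,m+q}` carries the factors `(n+p)!/t!` and `(m+q)!/i!`.
When `t < p`, the first is the product `(t+1)⋯(n+p)`, which contains the factor `p`;
when `i < q`, the second likewise contains `q`. Either way `gcd(p,q)` divides the coefficient. -/

theorem Nat.dvd_factorial_div_factorial {t p N : ℕ} (htp : t < p) (hpN : p ≤ N) :
    p ∣ N.factorial / t.factorial := by
  apply Nat.dvd_div_of_mul_dvd
  calc t.factorial * p ∣ (p - 1).factorial * p :=
        Nat.mul_dvd_mul_right (Nat.factorial_dvd_factorial (by omega)) p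
    _ = p.factorial := by rw [mul_comm, Nat.mul_factorial_pred (by omega)]
    _ ∣ N.factorial := Nat.factorial_dvd_factorial hpN

theorem Finsupp.single_zero_add_single_one_eq_iff {s j t i : ℕ} :
    (Finsupp.single (0 : Fin 2) s + Finsupp.single 1 j = Finsupp.single 0 t + Finsupp.single 1 i)
      ↔ s = t ∧ j = i := by
  constructor
  · intro h
    have h0 := DFunLike.congr_fun h 0
    have h1 := DFunLike.congr_fun h 1
    simp only [Finsupp.add_apply, Finsupp.single_apply] at h0 h1
    simpa using And.intro h0 h1
  · rintro ⟨rfl, rfl⟩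
    rfl

theorem MvPolynomial.C_mul_X_zero_pow_mul_X_one_pow {R : Type*} [CommSemiring R]
    (c : R) (s j : ℕ) :
    C c * X (0 : Fin 2) ^ s * X 1 ^ j = monomial (Finsupp.single 0 s + Finsupp.single 1 j) c := by
  rw [monomial_add_single, ← C_mul_X_pow_eq_monomial]

theorem coeff_sLag2_s17 {n m t i : ℕ} (ht : t ≤ n) (hi : i ≤ m) :
    coeff (Finsupp.single 0 t + Finsupp.single 1 i) (sLag2 n m) =
      (-1 : ℤ) ^ (i + t) * ((m.factorial / i.factorial : ℕ) : ℤ) *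
        ((n.factorial / t.factorial : ℕ) : ℤ) *
        ((m + n).choose (m - i) : ℤ) * ((n + i).choose (n - t) : ℤ) := by
  simp only [sLag2, C_mul_X_zero_pow_mul_X_one_pow, MvPolynomial.coeff_sum,
    MvPolynomial.coeff_monomial, Finsupp.single_zero_add_single_one_eq_iff]
  rw [Finset.sum_eq_single_of_mem i (Finset.mem_range.2 (by omega)),
    Finset.sum_eq_single_of_mem t (Finset.mem_range.2 (by omega))]
  · simp only [and_self, if_true]
  · intro s _ hs
    simp only [hs, false_and, if_false]
  · intro j _ hj
    simp only [hj, and_false, if_false, Finset.sum_const_zero]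

theorem stmt_17_general (n m : ℕ) (p q : ℕ)
    (t i : ℕ) (ht : t ≤ n + p) (hi : i ≤ m + q) (h : t < p ∨ i < q) :
    (Nat.gcd p q : ℤ) ∣
        MvPolynomial.coeff (Finsupp.single 0 t + Finsupp.single 1 i)
          (sLag2 (n + p) (m + q)) ∧
      MvPolynomial.coeff (Finsupp.single 0 t + Finsupp.single 1 i)
          (sLag2 (n + p) (m + q)) =
        (-1 : ℤ) ^ (i + t) * (((n + p).factorial / t.factorial : ℕ) : ℤ) *
          (((m + q).factorial / i.factorial : ℕ) : ℤ) *
          ((m + q + n + p).choose (m + q - i) : ℤ) *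
          ((n + p + i).choose (n + p - t) : ℤ) := by
  have hcoeff := coeff_sLag2_s17 ht hi
  rw [← add_assoc] at hcoeff
  refine ⟨?_, by rw [hcoeff]; ring⟩
  rw [hcoeff]
  rcases h with htp | hiq
  · have hdvd : Nat.gcd p q ∣ (n + p).factorial / t.factorial :=
      (Nat.gcd_dvd_left p q).trans (Nat.dvd_factorial_div_factorial htp (by omega))
    exact (((Int.natCast_dvd_natCast.2 hdvd).mul_left _).mul_right _).mul_right _
  · have hdvd : Nat.gcd p q ∣ (m + q).factorial / i.factorial :=
      (Nat.gcd_dvd_right p q).trans (Nat.dvd_factorial_div_factorial hiq (by omega))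
    exact ((((Int.natCast_dvd_natCast.2 hdvd).mul_left _).mul_right _).mul_right _).mul_right _

theorem stmt_17 (n m : ℕ) (p q : ℕ) (hp : 0 < p) (hq : 0 < q)
    (t i : ℕ) (ht : t ≤ n + p) (hi : i ≤ m + q) (h : t < p ∨ i < q) :
    (Nat.gcd p q : ℤ) ∣
        MvPolynomial.coeff (Finsupp.single 0 t + Finsupp.single 1 i)
          (sLag2 (n + p) (m + q)) ∧
      MvPolynomial.coeff (Finsupp.single 0 t + Finsupp.single 1 i)
          (sLag2 (n + p) (m + q)) =
        (-1 : ℤ) ^ (i + t) * (((n + p).factorial / t.factorial : ℕ) : ℤ) *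
          (((m + q).factorial / i.factorial : ℕ) : ℤ) *
          ((m + q + n + p).choose (m + q - i) : ℤ) *
          ((n + p + i).choose (n + p - t) : ℤ) :=
  stmt_17_general n m p q t i ht hi h
end

section
/- For all natural numbers k, α, t and all real x: e^x · (d^t/dx^t)( e^{−x} · L_k^α(x) ) = (−1)^t · L_k^{α+t}(x), where L_k^α denotes the generalized Laguerre polynomial regarded as a real polynomial function. -/
/-- The generalized Laguerre polynomial `L_k^α`, regarded as a smooth function of
a real variable: `L_k^α(x) = Σ_{j=0}^{k} ((−1)^j/j!) C(k+α, k−j) x^j`. -/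
noncomputable def lag (k α : ℕ) (x : ℝ) : ℝ :=
  ∑ j ∈ Finset.range (k + 1),
    (-1 : ℝ) ^ j / (j.factorial : ℝ) * ((k + α).choose (k - j) : ℝ) * x ^ j

/-! Pascal's rule for the binomial coefficients gives `L_{k+1}^{α+1} = L_{k+1}^α + L_k^{α+1}`, and
differentiating the coefficients gives `(L_{k+1}^α)' = -L_k^{α+1}`; together (and `L_0^α = 1`) they say
`(L_k^α)' = L_k^α - L_k^{α+1}` for every `k`. By the product rule the derivative of `e^{-x} L_k^α`
is therefore `-e^{-x} L_k^{α+1}`, and induction on `t` finishes. -/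

open Finset Nat

lemma lag_zero_left (α : ℕ) (x : ℝ) : lag 0 α x = 1 := by
  simp [lag]

lemma lag_succ_add_one (k α : ℕ) (x : ℝ) :
    lag (k + 1) (α + 1) x = lag (k + 1) α x + lag k (α + 1) x := by
  have pascal : ∀ j ∈ range (k + 1),
      (-1 : ℝ) ^ j / (j ! : ℝ) * ((k + 1 + (α + 1)).choose (k + 1 - j) : ℝ) * x ^ j =
        (-1 : ℝ) ^ j / (j ! : ℝ) * ((k + 1 + α).choose (k + 1 - j) : ℝ) * x ^ j +
          (-1 : ℝ) ^ j / (j ! : ℝ) * ((k + (α + 1)).choose (k - j) : ℝ) * x ^ j := by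
    intro j hj
    have hjk : k + 1 - j = (k - j) + 1 := by have := mem_range.mp hj; omega
    rw [hjk, show k + 1 + (α + 1) = (k + α + 1) + 1 by ring, choose_succ_succ,
      show k + 1 + α = k + α + 1 by ring, show k + (α + 1) = k + α + 1 by ring]
    push_cast
    ring
  unfold lag
  rw [sum_range_succ _ (k + 1), sum_range_succ _ (k + 1), sum_congr rfl pascal, sum_add_distrib]
  simp only [Nat.sub_self, choose_zero_right]
  ring

lemma hasDerivAt_lag_succ (k α : ℕ) (x : ℝ) :
    HasDerivAt (lag (k + 1) α) (-lag k (α + 1) x) x := by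
  unfold lag
  refine (HasDerivAt.fun_sum fun j _ => (hasDerivAt_pow j x).const_mul
    ((-1 : ℝ) ^ j / (j ! : ℝ) * ((k + 1 + α).choose (k + 1 - j) : ℝ))).congr_deriv ?_
  rw [sum_range_succ', ← sum_neg_distrib]
  simp only [CharP.cast_eq_zero, zero_mul, mul_zero, add_zero]
  refine sum_congr rfl fun j _ => ?_
  rw [show k + 1 + α = k + (α + 1) by ring, Nat.add_sub_add_right, factorial_succ,
    Nat.add_sub_cancel]
  push_cast
  field_simp
  ring

lemma hasDerivAt_lag (k α : ℕ) (x : ℝ) :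
    HasDerivAt (lag k α) (lag k α x - lag k (α + 1) x) x := by
  cases k with
  | zero =>
    rw [lag_zero_left, lag_zero_left, sub_self]
    exact (hasDerivAt_const x 1).congr_of_eventuallyEq
      (Filter.Eventually.of_forall fun u => lag_zero_left α u)
  | succ k =>
    rw [lag_succ_add_one, sub_add_cancel_left]
    exact hasDerivAt_lag_succ k α x

lemma hasDerivAt_exp_neg_mul_lag (k α : ℕ) (x : ℝ) :
    HasDerivAt (fun u => Real.exp (-u) * lag k α u) (-(Real.exp (-x) * lag k (α + 1) x)) x :=
  ((hasDerivAt_neg x).exp.fun_mul (hasDerivAt_lag k α x)).congr_deriv (by ring)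

lemma iteratedDeriv_exp_neg_mul_lag (k α t : ℕ) (x : ℝ) :
    iteratedDeriv t (fun u => Real.exp (-u) * lag k α u) x =
      (-1) ^ t * (Real.exp (-x) * lag k (α + t) x) := by
  induction t generalizing α with
  | zero => simp
  | succ t ih =>
    have hderiv : deriv (fun u => Real.exp (-u) * lag k α u) =
        fun u => -(Real.exp (-u) * lag k (α + 1) u) :=
      funext fun u => (hasDerivAt_exp_neg_mul_lag k α u).deriv
    rw [iteratedDeriv_succ', hderiv, iteratedDeriv_fun_neg, ih, add_right_comm, add_assoc,
      pow_succ]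
    ring

theorem stmt_18 (k α t : ℕ) (x : ℝ) :
    Real.exp x * iteratedDeriv t (fun u => Real.exp (-u) * lag k α u) x =
      (-1 : ℝ) ^ t * lag k (α + t) x := by
  rw [iteratedDeriv_exp_neg_mul_lag, Real.exp_neg]
  field_simp
end
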